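/- arXiv:2502.20236 — 3 statements merged into one kernel-verified Lean document; each statement's English description precedes it below -/
import Mathlib

section
/- Let B be a complete set and let p ∈ S(B) be a locally isolated complete type. Then p ∈ S_*(B), i.e., p is weakly orthogonal to P: for any realization c̄ of p, P ∩ (B ∪ c̄) = P ∩ B and B ∪ c̄ is complete. -/
open FirstOrder FirstOrder.Language Cardinal

universe u

namespace OverPredicate

variable (L : FirstOrder.Language.{u, u}) (C : Type u) [L.Structure C] [L.IsRelational]
variable (P : L.Relations 1)

/-- The set of realizations of the distinguished predicate `P` in the monster model `C`. -/
def Pset : Set C := { x | Structure.RelMap P ![x] }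

/-- The induced `L`-structure on a subset of the monster model
(the language is relational, so every subset is a substructure). -/
def setStructure (A : Set C) : L.Structure A where
  funMap := fun f _ => isEmptyElim f
  RelMap := fun r x => Structure.RelMap r (fun i => (x i : C))

/-- Realization of a formula in the structure induced on a subset `A` of the monster. -/
def RealizeIn (A : Set C) {α : Type*} (φ : L.Formula α) (v : α → A) : Prop :=
  letI := setStructure L C A
  φ.Realize v

/-- Satisfaction of a sentence in the structure induced on a subset of the monster. -/
def SatIn (A : Set C) (σ : L.Sentence) : Prop :=
  RealizeIn L C A σ (fun e => isEmptyElim e)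

/-- `A ≡ B`: the substructures of `C` with universes `A` and `B` are elementarily
equivalent, i.e. `Th(C|_A) = Th(C|_B)`. -/
def ElemEquivSets (A B : Set C) : Prop := ∀ σ : L.Sentence, SatIn L C A σ ↔ SatIn L C B σ

/-- `A ≺ B` for subsets of the monster model. -/
def ElemSubset (A B : Set C) : Prop :=
  ∃ h : A ⊆ B, ∀ (m : ℕ) (φ : L.Formula (Fin m)) (x : Fin m → A),
    RealizeIn L C A φ x ↔ RealizeIn L C B φ (fun i => ⟨(x i : C), h (x i).2⟩)

/-- `M ≺ C`: the subset `M` is the universe of an elementary submodel of the monster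
model; in particular `M ⊨ T`. -/
def ElemInC (M : Set C) : Prop :=
  ∀ (m : ℕ) (φ : L.Formula (Fin m)) (x : Fin m → M),
    RealizeIn L C M φ x ↔ φ.Realize (fun i => (x i : C))

/-- Formulas with parameters in `A` and `n` free variables. -/
def FormulaOver (A : Set C) (n : ℕ) :=
  Σ m : ℕ, L.Formula (Fin n ⊕ Fin m) × (Fin m → A)

/-- The tuple `c` realizes (in the monster) the formula `χ` with parameters in `A`. -/
def Realizes (A : Set C) {n : ℕ} (c : Fin n → C) (χ : FormulaOver L C A n) : Prop :=
  χ.2.1.Realize (Sum.elim c (fun i => (χ.2.2 i : C)))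

/-- The complete type of the tuple `c` over the set `A`. -/
def typeOf (A : Set C) {n : ℕ} (c : Fin n → C) : Set (FormulaOver L C A n) :=
  { χ | Realizes L C A c χ }

/-- `c` realizes the partial type `p` over `A`. -/
def RealizesAll (A : Set C) {n : ℕ} (c : Fin n → C) (p : Set (FormulaOver L C A n)) : Prop :=
  ∀ χ ∈ p, Realizes L C A c χ

/-- A partial type over `A` is consistent iff it is realized in the monster model. -/
def Consistent (A : Set C) {n : ℕ} (p : Set (FormulaOver L C A n)) : Prop :=
  ∃ c : Fin n → C, RealizesAll L C A c p

/-- `A ⊆ C` is complete: whenever `C ⊨ (∃ x̄ ⊆ P) ψ(x̄, b̄)` with `b̄` from `A`, there is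
a witness `ā` from `P ∩ A`. -/
def IsComplete (A : Set C) : Prop :=
  ∀ (k m : ℕ) (ψ : L.Formula (Fin k ⊕ Fin m)) (b : Fin m → C), (∀ i, b i ∈ A) →
    (∃ x : Fin k → C, (∀ i, x i ∈ Pset L C P) ∧ ψ.Realize (Sum.elim x b)) →
    ∃ a : Fin k → C, (∀ i, a i ∈ Pset L C P ∩ A) ∧ ψ.Realize (Sum.elim a b)

/-- `S_*(A)`: complete types over `A` (in `n` variables) weakly orthogonal to `P`. -/
def SStar (A : Set C) (n : ℕ) : Set (Set (FormulaOver L C A n)) :=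
  { p | ∃ c : Fin n → C, p = typeOf L C A c ∧
      Pset L C P ∩ (A ∪ Set.range c) = Pset L C P ∩ A ∧
      IsComplete L C P (A ∪ Set.range c) }

/-- `A` is stable over `P`: for every `A'` elementarily equivalent to `A`,
`|S_*(A')| ≤ |A'| ^ |T|`. -/
def IsStableSet (A : Set C) : Prop :=
  ∀ B : Set C, ElemEquivSets L C A B →
    #(Σ n : ℕ, ↥(SStar L C P B n)) ≤ #↥B ^ (Language.card L + ℵ₀)

/-- `T` is fully stable over `P`: every complete set is stable over `P`. -/
def FullyStable : Prop := ∀ A : Set C, IsComplete L C P A → IsStableSet L C P A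

/-- `T` is fully stable over `N ⊨ T^P`: every complete set with `P`-part `N` is stable. -/
def FullyStableOverSet (N : Set C) : Prop :=
  ∀ A : Set C, IsComplete L C P A → Pset L C P ∩ A = N → IsStableSet L C P A

/-- `A` has the existence property over `P`. -/
def HasExistence (A : Set C) : Prop :=
  ∃ M : Set C, ElemInC L C M ∧ A ⊆ M ∧ Pset L C P ∩ M = Pset L C P ∩ A

/-- Hypothesis 1: (i) `P` is stably embedded; (ii) `0`-definable subsets of `P^C` are
`0`-definable in the induced structure `C^P`; (iii) `T` has quantifier elimination. -/
def Hypothesis1 : Prop :=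
  (∀ (k m : ℕ) (ψ : L.Formula (Fin k ⊕ Fin m)) (a : Fin k → C),
    ∃ (l : ℕ) (θ : L.Formula (Fin m ⊕ Fin l)) (c : Fin l → C),
      (∀ i, c i ∈ Pset L C P) ∧
      ∀ y : Fin m → C, (∀ i, y i ∈ Pset L C P) →
        (ψ.Realize (Sum.elim a y) ↔ θ.Realize (Sum.elim y c))) ∧
  (∀ (m : ℕ) (φ : L.Formula (Fin m)),
    (∀ x : Fin m → C, φ.Realize x → ∀ i, x i ∈ Pset L C P) →
    ∃ θ : L.Formula (Fin m),
      ∀ x : Fin m → ↥(Pset L C P),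
        (φ.Realize (fun i => (x i : C)) ↔ RealizeIn L C (Pset L C P) θ x)) ∧
  (∀ (m : ℕ) (φ : L.Formula (Fin m)), ∃ θ : L.Formula (Fin m),
    θ.IsQF ∧ ∀ x : Fin m → C, (φ.Realize x ↔ θ.Realize x))

/-- A system of uniform defining formulas `Ψ_ψ(ȳ, z̄)`, one for each `ψ(x̄, ȳ)`. -/
def UniformDefs :=
  ∀ (k m : ℕ), L.Formula (Fin k ⊕ Fin m) → Σ l : ℕ, L.Formula (Fin m ⊕ Fin l)

/-- `U` is a system of uniform definitions of `ψ`-types over `P`. -/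
def IsUniformDefs (U : UniformDefs L) : Prop :=
  ∀ (k m : ℕ) (ψ : L.Formula (Fin k ⊕ Fin m)) (a : Fin k → C),
    ∃ c : Fin (U k m ψ).1 → C, (∀ i, c i ∈ Pset L C P) ∧
      ∀ y : Fin m → C, (∀ i, y i ∈ Pset L C P) →
        (ψ.Realize (Sum.elim a y) ↔ (U k m ψ).2.Realize (Sum.elim y c))

/-- Semantic implication between partial types over `A`. -/
def ImpliesSet (A : Set C) {n : ℕ} (r p : Set (FormulaOver L C A n)) : Prop :=
  ∀ c : Fin n → C, RealizesAll L C A c r → RealizesAll L C A c p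

/-- The restriction `p ↾ φ` of a type to instances (or negated instances) of `φ`. -/
def restrictTo (A : Set C) {n : ℕ} (p : Set (FormulaOver L C A n)) (m : ℕ)
    (φ : L.Formula (Fin n ⊕ Fin m)) : Set (FormulaOver L C A n) :=
  { χ ∈ p | ∃ b : Fin m → A, χ = ⟨m, φ, b⟩ ∨ χ = ⟨m, φ.not, b⟩ }

/-- A type over `A` is locally isolated if each of its restrictions `p ↾ φ` is
implied by a single formula in `p`. -/
def LocallyIsolated (A : Set C) {n : ℕ} (p : Set (FormulaOver L C A n)) : Prop :=
  ∀ (m : ℕ) (φ : L.Formula (Fin n ⊕ Fin m)),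
    ∃ θ ∈ p, ImpliesSet L C A {θ} (restrictTo L C A p m φ)

/-- A type `p` is `λ`-isolated if it is implied by a subset of size `< λ`. -/
def LambdaIsolated (A : Set C) {n : ℕ} (lam : Cardinal.{u})
    (p : Set (FormulaOver L C A n)) : Prop :=
  ∃ r ⊆ p, #↥r < lam ∧ ImpliesSet L C A r p

/-- `D` is locally constructible over `B`. -/
def LocallyConstructible (B D : Set C) : Prop :=
  B ⊆ D ∧ ∃ (α : Ordinal.{u}) (d : Ordinal.{u} → C),
    D = B ∪ d '' Set.Iio α ∧
    ∀ i < α, LocallyIsolated L C (B ∪ d '' Set.Iio i)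
      (typeOf L C (B ∪ d '' Set.Iio i) (fun _ : Fin 1 => d i))

/-- Relativized universal quantification: `(∀ z̄ ⊆ P) θ(·, z̄)`. -/
noncomputable def pAlls {α : Type*} (l : ℕ) (θ : L.Formula (α ⊕ Fin l)) : L.Formula α :=
  Formula.iAlls (Fin l)
    ((List.finRange l).foldr
      (fun j acc => (Relations.formula P ![Term.var (Sum.inr j)]).imp acc) θ)

/-- Relativized existential quantification: `(∃ z̄ ⊆ P) θ(·, z̄)`. -/
noncomputable def pExs {α : Type*} (l : ℕ) (θ : L.Formula (α ⊕ Fin l)) : L.Formula α :=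
  Formula.iExs (Fin l)
    ((List.finRange l).foldr
      (fun j acc => (Relations.formula P ![Term.var (Sum.inr j)]) ⊓ acc) θ)

/-- Standardize a formula `ψ(x̄, ȳ, z̄)` to the shape `ψ(w̄, z̄)` used for uniform definitions. -/
def psiStd {n m l : ℕ} (ψ : L.Formula ((Fin n ⊕ Fin m) ⊕ Fin l)) :
    L.Formula (Fin (n + m) ⊕ Fin l) :=
  ψ.relabel (Sum.map (⇑finSumFinEquiv) id)

/-- The number of parameters of the uniform definition of `ψ`. -/
def defLen (U : UniformDefs L) {n m l : ℕ} (ψ : L.Formula ((Fin n ⊕ Fin m) ⊕ Fin l)) : ℕ :=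
  (U (n + m) l (psiStd L ψ)).1

/-- The uniform defining formula `Ψ_ψ(z̄, w̄)` for `ψ(x̄, ȳ, z̄)`. -/
def defFml (U : UniformDefs L) {n m l : ℕ} (ψ : L.Formula ((Fin n ⊕ Fin m) ⊕ Fin l)) :
    L.Formula (Fin l ⊕ Fin (defLen L U ψ)) :=
  (U (n + m) l (psiStd L ψ)).2

/-- Combine two parameter tuples into one. -/
def combParams {γ : Type*} {m l : ℕ} (b : Fin m → γ) (d : Fin l → γ) : Fin (m + l) → γ :=
  fun i => Sum.elim b d (finSumFinEquiv.symm i)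

/-- The formula `(∀ z̄ ⊆ P) [ψ(x̄, ȳ, z̄) ↔ Ψ_ψ(z̄, w̄)]`, with free variables `x̄` and
parameter slots `ȳ w̄`. -/
noncomputable def eqDefFormula (U : UniformDefs L) {n m l : ℕ}
    (ψ : L.Formula ((Fin n ⊕ Fin m) ⊕ Fin l)) :
    L.Formula (Fin n ⊕ Fin (m + defLen L U ψ)) :=
  pAlls L P l
    ((ψ.relabel (fun v => match v with
        | Sum.inl (Sum.inl i) => Sum.inl (Sum.inl i)
        | Sum.inl (Sum.inr j) => Sum.inl (Sum.inr (Fin.castAdd (defLen L U ψ) j))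
        | Sum.inr z => Sum.inr z)).iff
      ((defFml L U ψ).relabel (fun v => match v with
        | Sum.inl z => Sum.inr z
        | Sum.inr j => Sum.inl (Sum.inr (Fin.natAdd m j)))))

/-- The formula `[(∃ z̄ ⊆ P) ψ(x̄, ȳ, z̄)] → ψ(x̄, ȳ, z̄')`, with free variables `x̄` and
parameter slots `ȳ z̄'`. -/
noncomputable def exImpFormula {n m l : ℕ}
    (ψ : L.Formula ((Fin n ⊕ Fin m) ⊕ Fin l)) :
    L.Formula (Fin n ⊕ Fin (m + l)) :=
  (pExs L P l (ψ.relabel (fun v => match v with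
      | Sum.inl (Sum.inl i) => Sum.inl (Sum.inl i)
      | Sum.inl (Sum.inr j) => Sum.inl (Sum.inr (Fin.castAdd l j))
      | Sum.inr z => Sum.inr z))).imp
    (ψ.relabel (fun v => match v with
      | Sum.inl (Sum.inl i) => Sum.inl i
      | Sum.inl (Sum.inr j) => Sum.inr (Fin.castAdd l j)
      | Sum.inr z => Sum.inr (Fin.natAdd m z)))

/-- `r` is a `Δ`-type over `A`. -/
def IsDeltaType (A : Set C) {n : ℕ} (Δ : Set (Σ m : ℕ, L.Formula (Fin n ⊕ Fin m)))
    (r : Set (FormulaOver L C A n)) : Prop :=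
  ∀ χ ∈ r, ∃ ψ ∈ Δ, ∃ b : Fin ψ.1 → A,
    χ = ⟨ψ.1, ψ.2, b⟩ ∨ χ = ⟨ψ.1, ψ.2.not, b⟩

/-- `r` and `s` are explicitly contradictory. -/
def ExplicitlyContradictory (A : Set C) {n : ℕ}
    (r s : Set (FormulaOver L C A n)) : Prop :=
  ∃ (m : ℕ) (ψ : L.Formula (Fin n ⊕ Fin m)) (b : Fin m → A),
    (⟨m, ψ, b⟩ : FormulaOver L C A n) ∈ r ∧ (⟨m, ψ.not, b⟩ : FormulaOver L C A n) ∈ s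

/-- The rank `R^n_A(p, Δ₁, Δ₂, λ) ≥ β` (for finite `β`), relative to a fixed system `U`
of uniform defining formulas. -/
noncomputable def RankGE (U : UniformDefs L) (A : Set C) (n : ℕ)
    (Δ₁ : Set (Σ m : ℕ, L.Formula (Fin n ⊕ Fin m)))
    (Δ₂ : Set (Σ m : ℕ, Σ l : ℕ, L.Formula ((Fin n ⊕ Fin m) ⊕ Fin l)))
    (lam : Cardinal.{u}) : ℕ → Set (FormulaOver L C A n) → Prop
  | 0, p => Consistent L C A p
  | (β + 1), p =>
      if Even β then
        ∀ μ : Ordinal.{u}, μ.card < lam → ∀ q ⊆ p, q.Finite →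
          ∃ r : { i : Ordinal.{u} // i ≤ μ } → Set (FormulaOver L C A n),
            (∀ i, IsDeltaType L C A Δ₁ (r i)) ∧
            (∀ i j, i ≠ j → ExplicitlyContradictory L C A (r i) (r j)) ∧
            (∀ i, RankGE U A n Δ₁ Δ₂ lam β (q ∪ r i))
      else
        ∀ μ : Ordinal.{u}, μ.card < lam → ∀ q ⊆ p, q.Finite →
          ∀ ψ : { i : Ordinal.{u} // i ≤ μ } →
              (Σ m : ℕ, Σ l : ℕ, L.Formula ((Fin n ⊕ Fin m) ⊕ Fin l)),
            (∀ i, ψ i ∈ Δ₂) →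
            ∀ b : ∀ i, Fin (ψ i).1 → A,
              ∃ d : ∀ i, Fin (defLen L U (ψ i).2.2) → ↥(Pset L C P ∩ A),
                RankGE U A n Δ₁ Δ₂ lam β
                  (q ∪ Set.range fun i =>
                    (⟨(ψ i).1 + defLen L U (ψ i).2.2, eqDefFormula L P U (ψ i).2.2,
                      combParams (b i) (fun j => (⟨(d i j : C), (d i j).2.2⟩ : A))⟩ :
                      FormulaOver L C A n))

/-- The definable closure of `A` in the monster model. -/
def dclSet (A : Set C) : Set C :=
  { b | ∃ (k : ℕ) (φ : L.Formula (Fin 1 ⊕ Fin k)) (a : Fin k → A),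
      φ.Realize (Sum.elim (fun _ => b) (fun i => (a i : C))) ∧
      ∀ b' : C, φ.Realize (Sum.elim (fun _ => b') (fun i => (a i : C))) → b' = b }

/-- The algebraic closure of `A` in the monster model. -/
def aclSet (A : Set C) : Set C :=
  { b | ∃ (k : ℕ) (φ : L.Formula (Fin 1 ⊕ Fin k)) (a : Fin k → A),
      φ.Realize (Sum.elim (fun _ => b) (fun i => (a i : C))) ∧
      { b' : C | φ.Realize (Sum.elim (fun _ => b') (fun i => (a i : C))) }.Finite }

/-- `T^P` eliminates imaginaries: every subset of a power of `P^C` definable with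
parameters in the induced structure `C^P` has a code there. -/
def EliminatesImaginariesP : Prop :=
  ∀ (n : ℕ) (X : Set (Fin n → ↥(Pset L C P))),
    (∃ (k : ℕ) (ψ : L.Formula (Fin n ⊕ Fin k)) (b : Fin k → ↥(Pset L C P)),
        ∀ x, x ∈ X ↔ RealizeIn L C (Pset L C P) ψ (Sum.elim x b)) →
    ∃ (l : ℕ) (φ : L.Formula (Fin n ⊕ Fin l)) (c : Fin l → ↥(Pset L C P)),
      (∀ x, x ∈ X ↔ RealizeIn L C (Pset L C P) φ (Sum.elim x c)) ∧
      ∀ c' : Fin l → ↥(Pset L C P),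
        (∀ x, x ∈ X ↔ RealizeIn L C (Pset L C P) φ (Sum.elim x c')) → c' = c

/-- The subset `N` of the monster is `λ`-saturated (as an `L`-structure). -/
def IsSaturatedSet (N : Set C) (lam : Cardinal.{u}) : Prop :=
  ∀ p : Set (Σ k : ℕ, L.Formula (Fin 1 ⊕ Fin k) × (Fin k → N)),
    #↥p < lam →
    (∀ q ⊆ p, q.Finite →
       ∃ c : N, ∀ χ ∈ q, RealizeIn L C N χ.2.1 (Sum.elim (fun _ : Fin 1 => c) χ.2.2)) →
    ∃ c : N, ∀ χ ∈ p, RealizeIn L C N χ.2.1 (Sum.elim (fun _ : Fin 1 => c) χ.2.2)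

/-- `f` is a partial elementary map from `D` into the monster model. -/
def PartialElemMap (D : Set C) (f : D → C) : Prop :=
  ∀ (m : ℕ) (φ : L.Formula (Fin m)) (x : Fin m → D),
    φ.Realize (fun i => ((x i) : C)) ↔ φ.Realize (fun i => f (x i))


end OverPredicate

/-!
Let `c̄` realize `p = tp(c̄/B)` and let `ψ(ā', c̄, b̄)` hold with `ā' ⊆ P` and `b̄ ⊆ B`.
Reading `ψ` as a formula `φ(z̄; x̄, w̄)` in the variables of `c̄`, local isolation gives
`θ(z̄) ∈ p` implying `p ↾ φ`. Since `∃ z̄ (θ(z̄) ∧ ψ(ā', z̄, b̄))` holds, completeness of `B`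
yields `ā ⊆ P ∩ B` and `d̄` with `θ(d̄) ∧ ψ(ā, d̄, b̄)`. As `ā ⊆ B`, the complete type `p`
decides `ψ(ā, z̄, b̄)`, and it cannot contain the negation, since `θ` would imply it and `d̄`
refutes that; hence `ψ(ā, c̄, b̄)`. The instance `x = c_j` gives `P ∩ (B ∪ c̄) ⊆ B`.
-/

namespace FirstOrder.Language.Formula

variable {L : Language} {M : Type*} [L.Structure M] {k l m n : ℕ}

/-- `ψ(x̄; z̄, w̄)` read as a formula in `z̄` with parameters `x̄ ⁀ w̄`. -/
def swapVars (ψ : L.Formula (Fin k ⊕ (Fin n ⊕ Fin m))) : L.Formula (Fin n ⊕ Fin (k + m)) :=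
  ψ.relabel (Sum.elim (Sum.inr ∘ Fin.castAdd m) (Sum.elim Sum.inl (Sum.inr ∘ Fin.natAdd k)))

theorem realize_swapVars (ψ : L.Formula (Fin k ⊕ (Fin n ⊕ Fin m))) (z : Fin n → M)
    (v : Fin (k + m) → M) :
    ψ.swapVars.Realize (Sum.elim z v) ↔
      ψ.Realize (Sum.elim (v ∘ Fin.castAdd m) (Sum.elim z (v ∘ Fin.natAdd k))) := by
  rw [swapVars, realize_relabel]
  exact iff_of_eq (congrArg _ (by ext (i | i | i) <;> rfl))

/-- The formula `∃ z̄ (θ(z̄, ū) ∧ ψ(x̄; z̄, w̄))` in `x̄` with parameters `ū ⁀ w̄`. -/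
noncomputable def exsInf (θ : L.Formula (Fin n ⊕ Fin l))
    (ψ : L.Formula (Fin k ⊕ (Fin n ⊕ Fin m))) : L.Formula (Fin k ⊕ Fin (l + m)) :=
  ((θ.relabel (Sum.elim Sum.inr (Sum.inl ∘ Sum.inr ∘ Fin.castAdd m))) ⊓
    (ψ.relabel (Sum.elim (Sum.inl ∘ Sum.inl)
      (Sum.elim Sum.inr (Sum.inl ∘ Sum.inr ∘ Fin.natAdd l))))).iExs (Fin n)

theorem realize_exsInf (θ : L.Formula (Fin n ⊕ Fin l))
    (ψ : L.Formula (Fin k ⊕ (Fin n ⊕ Fin m))) (x : Fin k → M) (v : Fin (l + m) → M) :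
    (exsInf θ ψ).Realize (Sum.elim x v) ↔ ∃ z : Fin n → M,
      θ.Realize (Sum.elim z (v ∘ Fin.castAdd m)) ∧
      ψ.Realize (Sum.elim x (Sum.elim z (v ∘ Fin.natAdd l))) := by
  simp only [exsInf, realize_iExs, realize_inf, realize_relabel]
  refine exists_congr fun z => and_congr (iff_of_eq (congrArg _ ?_)) (iff_of_eq (congrArg _ ?_))
  · ext (i | i) <;> rfl
  · ext (i | i | i) <;> rfl

end FirstOrder.Language.Formula

namespace OverPredicate

open Set

section

variable {L : FirstOrder.Language.{u, u}} {C : Type u} [L.Structure C]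

theorem typeOf_eq_of_realizesAll {A : Set C} {n : ℕ} {c c₀ : Fin n → C}
    (hc : RealizesAll L C A c (typeOf L C A c₀)) : typeOf L C A c = typeOf L C A c₀ := by
  ext ⟨m, φ, b⟩
  refine ⟨fun hφ => by_contra fun hφ₀ => ?_, hc _⟩
  exact (Formula.realize_not.1 (hc ⟨m, φ.not, b⟩ (Formula.realize_not.2 hφ₀))) hφ

theorem exists_relabel_of_mem_union_range {α : Type*} {B : Set C} (b₀ : B) {n m : ℕ}
    (c : Fin n → C) (ψ : L.Formula (α ⊕ Fin m)) (b : Fin m → C)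
    (hb : ∀ i, b i ∈ B ∪ range c) :
    ∃ (ψ' : L.Formula (α ⊕ (Fin n ⊕ Fin m))) (w : Fin m → B),
      ∀ x, ψ'.Realize (Sum.elim x (Sum.elim c (Subtype.val ∘ w))) ↔ ψ.Realize (Sum.elim x b) := by
  have hσ : ∀ i, ∃ s : B ⊕ Fin n, Sum.elim Subtype.val c s = b i := fun i =>
    (hb i).elim (fun h => ⟨.inl ⟨b i, h⟩, rfl⟩) fun ⟨j, hj⟩ => ⟨.inr j, hj⟩
  choose σ hσ using hσ
  refine ⟨ψ.relabel (Sum.map id fun i => (σ i).elim (fun _ => .inr i) .inl),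
    fun i => (σ i).elim id fun _ => b₀, fun x => ?_⟩
  rw [Formula.realize_relabel, Sum.elim_comp_map, Function.comp_id]
  refine iff_of_eq (congrArg _ (congrArg _ (funext fun i => ?_)))
  rw [Function.comp_apply, ← hσ i]
  rcases hi : σ i with β | j <;> simp [hi]

variable (L C) in
/-- `P`-witnesses for formulas with parameters in `D` can be found in `P ∩ B`. -/
def HasPWitnessesIn (P : L.Relations 1) (D B : Set C) : Prop :=
  ∀ (k m : ℕ) (ψ : L.Formula (Fin k ⊕ Fin m)) (b : Fin m → C), (∀ i, b i ∈ D) →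
    (∃ x : Fin k → C, (∀ i, x i ∈ Pset L C P) ∧ ψ.Realize (Sum.elim x b)) →
    ∃ a : Fin k → C, (∀ i, a i ∈ Pset L C P ∩ B) ∧ ψ.Realize (Sum.elim a b)

variable {P : L.Relations 1}

theorem HasPWitnessesIn.isComplete {B D : Set C} (h : HasPWitnessesIn L C P D B)
    (hBD : B ⊆ D) : IsComplete L C P D := fun k m ψ b hb hex =>
  let ⟨a, ha, hψ⟩ := h k m ψ b hb hex
  ⟨a, fun i => ⟨(ha i).1, hBD (ha i).2⟩, hψ⟩

theorem HasPWitnessesIn.pset_inter_eq {B D : Set C} (h : HasPWitnessesIn L C P D B)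
    (hBD : B ⊆ D) : Pset L C P ∩ D = Pset L C P ∩ B := by
  refine (inter_subset_inter_right _ hBD).antisymm' fun x hx => ?_
  obtain ⟨a, ha, hax⟩ := h 1 1 ((Term.var (Sum.inl 0)).equal (Term.var (Sum.inr 0)))
    (fun _ => x) (fun _ => hx.2) ⟨fun _ => x, fun _ => hx.1, by simp⟩
  simp only [Formula.realize_equal, Term.realize_var, Sum.elim_inl, Sum.elim_inr] at hax
  exact hax ▸ ha 0

theorem IsComplete.inter_nonempty {B : Set C} (hB : IsComplete L C P B)
    (hP : (Pset L C P).Nonempty) : (Pset L C P ∩ B).Nonempty := by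
  obtain ⟨x, hx⟩ := hP
  obtain ⟨a, ha, -⟩ := hB 1 0 ⊤ finZeroElim finZeroElim ⟨fun _ => x, fun _ => hx, by simp⟩
  exact ⟨a 0, ha 0⟩

theorem IsComplete.exists_witness_of_locallyIsolated {B : Set C} (hB : IsComplete L C P B)
    {n : ℕ} {c : Fin n → C} (hiso : LocallyIsolated L C B (typeOf L C B c)) {k m : ℕ}
    (ψ : L.Formula (Fin k ⊕ (Fin n ⊕ Fin m))) (w : Fin m → B)
    (hex : ∃ x : Fin k → C, (∀ i, x i ∈ Pset L C P) ∧
      ψ.Realize (Sum.elim x (Sum.elim c (Subtype.val ∘ w)))) :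
    ∃ a : Fin k → C, (∀ i, a i ∈ Pset L C P ∩ B) ∧
      ψ.Realize (Sum.elim a (Sum.elim c (Subtype.val ∘ w))) := by
  obtain ⟨x₀, hx₀P, hx₀⟩ := hex
  obtain ⟨⟨l, θ, u⟩, hθc, hθ⟩ := hiso (k + m) ψ.swapVars
  have hu : (Subtype.val ∘ Fin.append u w) ∘ Fin.castAdd m = Subtype.val ∘ u := by
    ext; simp
  have hw : (Subtype.val ∘ Fin.append u w) ∘ Fin.natAdd l = Subtype.val ∘ w := by
    ext; simp
  obtain ⟨a, haPB, ha⟩ := hB k (l + m) (Formula.exsInf θ ψ) (Subtype.val ∘ Fin.append u w)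
    (fun i => (Fin.append u w i).2)
    ⟨x₀, hx₀P, (Formula.realize_exsInf _ _ _ _).2 ⟨c, by rwa [hu], by rwa [hw]⟩⟩
  rw [Formula.realize_exsInf, hu, hw] at ha
  obtain ⟨z, hzθ, hzψ⟩ := ha
  refine ⟨a, haPB, by_contra fun hna => ?_⟩
  -- Completeness of `typeOf c` puts `¬ψ(a; c, w)` in it, and `θ` would force `z` to satisfy it.
  set v : Fin (k + m) → B := Fin.append (fun i => ⟨a i, (haPB i).2⟩) w
  have hva : (Subtype.val ∘ v) ∘ Fin.castAdd m = a := by ext; simp [v]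
  have hvw : (Subtype.val ∘ v) ∘ Fin.natAdd k = Subtype.val ∘ w := by ext; simp [v]
  have hneg : (⟨k + m, ψ.swapVars.not, v⟩ : FormulaOver L C B n) ∈ typeOf L C B c := by
    show ¬ ψ.swapVars.Realize (Sum.elim c (Subtype.val ∘ v))
    rwa [Formula.realize_swapVars, hva, hvw]
  have hz := hθ z (fun χ hχ => (mem_singleton_iff.1 hχ) ▸ hzθ) _ ⟨hneg, v, Or.inr rfl⟩
  change ¬ ψ.swapVars.Realize (Sum.elim z (Subtype.val ∘ v)) at hz
  rw [Formula.realize_swapVars, hva, hvw] at hz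
  exact hz hzψ

theorem IsComplete.hasPWitnessesIn_union_range {B : Set C} (hB : IsComplete L C P B) {n : ℕ}
    {c : Fin n → C} (hiso : LocallyIsolated L C B (typeOf L C B c)) :
    HasPWitnessesIn L C P (B ∪ range c) B := by
  intro k m ψ b hb hex
  rcases isEmpty_or_nonempty (Fin k) with _ | ⟨⟨i₀⟩⟩
  · obtain ⟨x, -, hx⟩ := hex
    exact ⟨x, isEmptyElim, hx⟩
  obtain ⟨b₀, -, hb₀⟩ := hB.inter_nonempty (hex.elim fun x hx => ⟨x i₀, hx.1 i₀⟩)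
  obtain ⟨ψ', w, hψ'⟩ := exists_relabel_of_mem_union_range ⟨b₀, hb₀⟩ c ψ b hb
  obtain ⟨a, ha, haψ⟩ := hB.exists_witness_of_locallyIsolated hiso ψ' w
    (hex.imp fun x hx => ⟨hx.1, (hψ' x).2 hx.2⟩)
  exact ⟨a, ha, (hψ' a).1 haψ⟩

end

variable (L : FirstOrder.Language.{u, u}) (C : Type u) [L.Structure C] [L.IsRelational]
variable (P : L.Relations 1)

theorem locally_isolated_implies_star
    (B : Set C) (hB : IsComplete L C P B)
    (n : ℕ) (p : Set (FormulaOver L C B n))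
    (hp : ∃ c : Fin n → C, p = typeOf L C B c)
    (hiso : LocallyIsolated L C B p) :
    p ∈ SStar L C P B n ∧
    ∀ c : Fin n → C, RealizesAll L C B c p →
      (Pset L C P ∩ (B ∪ Set.range c) = Pset L C P ∩ B ∧
       IsComplete L C P (B ∪ Set.range c)) := by
  obtain ⟨c₀, rfl⟩ := hp
  have hstar : ∀ c : Fin n → C, RealizesAll L C B c (typeOf L C B c₀) →
      Pset L C P ∩ (B ∪ range c) = Pset L C P ∩ B ∧ IsComplete L C P (B ∪ range c) := by
    intro c hc
    rw [← typeOf_eq_of_realizesAll hc] at hiso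
    have h := hB.hasPWitnessesIn_union_range hiso
    exact ⟨h.pset_inter_eq subset_union_left, h.isComplete subset_union_left⟩
  exact ⟨⟨c₀, rfl, hstar c₀ fun _ h => h⟩, hstar⟩

end OverPredicate
end

section
/- Let the uniform defining formulas Ψ_ψ(ȳ,z̄) be fixed as in the uniform definability observation. Then for any complete set A and any tuple ā from A, the ψ-type tp_ψ(ā/P ∩ A) is definable by Ψ_ψ(ȳ,c̄) for some tuple c̄ from A ∩ P; that is, there is c̄ ⊆ A ∩ P such that for all ȳ in P^C, C ⊨ ψ(ā,ȳ) if and only if C ⊨ Ψ_ψ(ȳ,c̄). -/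
open FirstOrder FirstOrder.Language Cardinal

universe u

namespace OverPredicate

variable (L : FirstOrder.Language.{u, u}) (C : Type u) [L.Structure C] [L.IsRelational]
variable (P : L.Relations 1)

/-! The statement "`Ψ(ȳ, z̄)` defines the `ψ`-type of `ā` over `P`" is expressed by the formula
`(∀ ȳ ⊆ P) [ψ(ā, ȳ) ↔ Ψ(ȳ, z̄)]` in `z̄`, whose parameters `ā` lie in `A`. Uniform
definability provides a solution `z̄` in `P`, so completeness of `A` provides one in `P ∩ A`. -/

section Definability

variable {L C}

omit [L.IsRelational]

theorem realize_foldr_imp_rel {α : Type*} {l : ℕ} (θ : L.Formula (α ⊕ Fin l))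
    (js : List (Fin l)) (w : α ⊕ Fin l → C) :
    (js.foldr (fun j acc => (Relations.formula P ![Term.var (Sum.inr j)]).imp acc) θ).Realize w ↔
      ((∀ j ∈ js, w (Sum.inr j) ∈ Pset L C P) → θ.Realize w) := by
  induction js with
  | nil => simp
  | cons j js ih =>
    rw [List.foldr_cons, ← Relations.formula₁, Formula.realize_imp, Formula.realize_rel₁, ih,
      List.forall_mem_cons]
    exact ⟨fun h hP => h hP.1 hP.2, fun h hj hjs => h ⟨hj, hjs⟩⟩

theorem realize_pAlls {α : Type*} {l : ℕ} (θ : L.Formula (α ⊕ Fin l)) (v : α → C) :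
    (pAlls L P l θ).Realize v ↔
      ∀ z : Fin l → C, (∀ i, z i ∈ Pset L C P) → θ.Realize (Sum.elim v z) := by
  simp only [pAlls, Formula.realize_iAlls, realize_foldr_imp_rel, List.mem_finRange,
    forall_const, Sum.elim_inr]

def DefinesTypeOverP {k m l : ℕ} (ψ : L.Formula (Fin k ⊕ Fin m)) (Ψ : L.Formula (Fin m ⊕ Fin l))
    (a : Fin k → C) (c : Fin l → C) : Prop :=
  ∀ y : Fin m → C, (∀ i, y i ∈ Pset L C P) →
    (ψ.Realize (Sum.elim a y) ↔ Ψ.Realize (Sum.elim y c))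

/-- The formula `(∀ ȳ ⊆ P) [ψ(x̄, ȳ) ↔ Ψ(ȳ, z̄)]` in the variables `z̄ x̄`. -/
noncomputable def definesTypeOverPFormula {k m l : ℕ} (ψ : L.Formula (Fin k ⊕ Fin m))
    (Ψ : L.Formula (Fin m ⊕ Fin l)) : L.Formula (Fin l ⊕ Fin k) :=
  pAlls L P m ((ψ.relabel (Sum.map Sum.inr id)).iff
    (Ψ.relabel (Sum.elim Sum.inr (Sum.inl ∘ Sum.inl))))

theorem realize_definesTypeOverPFormula {k m l : ℕ} (ψ : L.Formula (Fin k ⊕ Fin m))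
    (Ψ : L.Formula (Fin m ⊕ Fin l)) (a : Fin k → C) (c : Fin l → C) :
    (definesTypeOverPFormula P ψ Ψ).Realize (Sum.elim c a) ↔ DefinesTypeOverP P ψ Ψ a c := by
  rw [definesTypeOverPFormula, realize_pAlls]
  refine forall_congr' fun y => imp_congr_right fun _ => ?_
  rw [Formula.realize_iff, Formula.realize_relabel, Formula.realize_relabel]
  congr! <;> ext (_ | _) <;> rfl

variable {P} in
theorem IsComplete.exists_definesTypeOverP {A : Set C} (hA : IsComplete L C P A)
    {k m l : ℕ} {ψ : L.Formula (Fin k ⊕ Fin m)} {Ψ : L.Formula (Fin m ⊕ Fin l)}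
    {a : Fin k → C} (ha : ∀ i, a i ∈ A) {c : Fin l → C} (hcP : ∀ i, c i ∈ Pset L C P)
    (hc : DefinesTypeOverP P ψ Ψ a c) :
    ∃ c' : Fin l → C, (∀ i, c' i ∈ Pset L C P ∩ A) ∧ DefinesTypeOverP P ψ Ψ a c' := by
  obtain ⟨c', hc'A, hc'⟩ := hA l k (definesTypeOverPFormula P ψ Ψ) a ha
    ⟨c, hcP, (realize_definesTypeOverPFormula P ψ Ψ a c).2 hc⟩
  exact ⟨c', hc'A, (realize_definesTypeOverPFormula P ψ Ψ a c').1 hc'⟩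

end Definability

theorem types_over_P_definable_over_P_part
    (U : UniformDefs L) (hU : IsUniformDefs L C P U)
    (A : Set C) (hA : IsComplete L C P A)
    (k m : ℕ) (ψ : L.Formula (Fin k ⊕ Fin m))
    (a : Fin k → C) (ha : ∀ i, a i ∈ A) :
    ∃ c : Fin (U k m ψ).1 → C, (∀ i, c i ∈ Pset L C P ∩ A) ∧
      ∀ y : Fin m → C, (∀ i, y i ∈ Pset L C P) →
        (ψ.Realize (Sum.elim a y) ↔ (U k m ψ).2.Realize (Sum.elim y c)) := by
  obtain ⟨c, hcP, hc⟩ := hU k m ψ a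
  exact hA.exists_definesTypeOverP ha hcP hc

end OverPredicate
end

section
/- Assume that T^P eliminates imaginaries. Then every subset of P^C that is definable in C (with arbitrary parameters from C) has a code in P^C: a tuple c ⊆ P^C such that for every automorphism σ of C, σ fixes the set setwise if and only if σ fixes c pointwise. -/
open FirstOrder FirstOrder.Language Cardinal

universe u

/-!
By stable embeddedness, `X = θ(C, c) ∩ Pⁿ` for a tuple `c` from `P`, and by Hypothesis 1 (ii)
the relativisation of `θ` to `P` is equivalent to a formula of `C^P`; so `X` is definable in
`C^P`, and elimination of imaginaries in `T^P` gives it a code `c₀` there. An automorphism of `C`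
preserves `P`, hence restricts to an automorphism of `C^P`, and it fixes `X` iff its restriction
does, i.e. iff it fixes `c₀`.
-/

namespace OverPredicate

theorem fixes_iff_fixes_code {L : Language} {M : Type*} [L.Structure M] {n l : ℕ}
    {Y : Set (Fin n → M)} {φ : L.Formula (Fin n ⊕ Fin l)} {c : Fin l → M}
    (hdef : ∀ x, x ∈ Y ↔ φ.Realize (Sum.elim x c))
    (huniq : ∀ c', (∀ x, x ∈ Y ↔ φ.Realize (Sum.elim x c')) → c' = c) (τ : M ≃[L] M) :
    (∀ x, x ∈ Y ↔ τ ∘ x ∈ Y) ↔ ∀ i, τ (c i) = c i := by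
  constructor
  · intro hY i
    have hc : τ.symm ∘ c = c := huniq _ fun x => by
      rw [hY, hdef, ← StrongHomClass.realize_formula τ.symm]
      congr! 1
      ext (j | j) <;> simp
    simpa using congrArg τ (congrFun hc i).symm
  · intro hc x
    rw [hdef, hdef, ← StrongHomClass.realize_formula τ φ]
    congr! 1
    ext (j | j) <;> simp [hc]

section

variable {L : FirstOrder.Language.{u, u}} {C : Type u} [L.Structure C] {P : L.Relations 1}

theorem apply_mem_Pset_iff (σ : C ≃[L] C) {x : C} : σ x ∈ Pset L C P ↔ x ∈ Pset L C P := by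
  have hcomp : σ ∘ ![x] = ![σ x] := by ext i; fin_cases i; rfl
  simpa only [Pset, Set.mem_ofPred_eq, hcomp] using σ.map_rel P ![x]

variable [L.IsRelational]

def restrictEquiv (A : Set C) (σ : C ≃[L] C) (hA : ∀ x, σ x ∈ A ↔ x ∈ A) :
    @Language.Equiv L A A (setStructure L C A) (setStructure L C A) :=
  letI := setStructure L C A
  { toFun := fun x => ⟨σ x, (hA x).2 x.2⟩
    invFun := fun x => ⟨σ.symm x, (hA _).1 (by simp [x.2])⟩
    left_inv := fun x => Subtype.ext (σ.symm_apply_apply x)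
    right_inv := fun x => Subtype.ext (σ.apply_symm_apply x)
    map_fun' := fun f _ => isEmptyElim f
    map_rel' := fun r x => σ.map_rel r (fun i => (x i : C)) }

@[simp]
theorem coe_restrictEquiv_apply {A : Set C} (σ : C ≃[L] C) (hA : ∀ x, σ x ∈ A ↔ x ∈ A) (x : A) :
    (restrictEquiv A σ hA x : C) = σ x :=
  rfl

theorem invariant_iff_restrictEquiv_invariant {A : Set C} (σ : C ≃[L] C)
    (hA : ∀ x, σ x ∈ A ↔ x ∈ A) {n : ℕ} {X : Set (Fin n → C)} (hXA : ∀ x ∈ X, ∀ i, x i ∈ A) :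
    (∀ x : Fin n → C, x ∈ X ↔ (fun i => σ (x i)) ∈ X) ↔
      ∀ x : Fin n → A, ((↑) ∘ x ∈ X ↔ (↑) ∘ (restrictEquiv A σ hA ∘ x) ∈ X) := by
  refine ⟨fun hX x => hX _, fun hX x => ?_⟩
  by_cases hx : ∀ i, x i ∈ A
  · exact hX fun i => ⟨x i, hx i⟩
  · push Not at hx
    obtain ⟨i, hi⟩ := hx
    exact iff_of_false (fun h => hi (hXA x h i)) fun h => hi ((hA _).1 (hXA _ h i))

theorem Hypothesis1.exists_realizeIn_iff_realize (h1 : Hypothesis1 L C P) {α : Type*} [Finite α]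
    (φ : L.Formula α) :
    ∃ θ : L.Formula α, ∀ x : α → Pset L C P,
      φ.Realize (fun i => (x i : C)) ↔ RealizeIn L C (Pset L C P) θ x := by
  obtain ⟨m, ⟨e⟩⟩ := Finite.exists_equiv_fin α
  let φP : L.Formula (Fin m) :=
    φ.relabel ⇑e ⊓ Formula.iInf fun i => P.formula₁ (Term.var i)
  have hφP : ∀ x : Fin m → C, φP.Realize x → ∀ i, x i ∈ Pset L C P := fun x hx i =>
    by simpa [Pset] using Formula.realize_iInf.1 (Formula.realize_inf.1 hx).2 i
  obtain ⟨θ, hθ⟩ := h1.2.1 m φP hφP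
  refine ⟨θ.relabel ⇑e.symm, fun x => ?_⟩
  have hrelabel : RealizeIn L C (Pset L C P) (θ.relabel e.symm) x ↔
      RealizeIn L C (Pset L C P) θ (x ∘ e.symm) :=
    letI := setStructure L C (Pset L C P)
    Formula.realize_relabel
  rw [hrelabel, ← hθ]
  simp only [φP, Formula.realize_inf, Formula.realize_relabel, Formula.realize_iInf,
    Formula.realize_rel₁, Term.realize_var, Function.comp_def, Equiv.symm_apply_apply]
  exact (and_iff_left fun i => (x (e.symm i)).2).symm

theorem Hypothesis1.exists_realizeIn_of_definable (h1 : Hypothesis1 L C P) {n : ℕ}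
    {X : Set (Fin n → C)}
    (hX : ∃ (k : ℕ) (φ : L.Formula (Fin n ⊕ Fin k)) (a : Fin k → C),
      ∀ x : Fin n → C, x ∈ X ↔ φ.Realize (Sum.elim x a)) :
    ∃ (l : ℕ) (ψ : L.Formula (Fin n ⊕ Fin l)) (c : Fin l → Pset L C P),
      ∀ x : Fin n → Pset L C P,
        (fun i => (x i : C)) ∈ X ↔ RealizeIn L C (Pset L C P) ψ (Sum.elim x c) := by
  obtain ⟨k, φ, a, hφ⟩ := hX
  obtain ⟨l, θ, c, hcP, hθ⟩ := h1.1 k n (φ.relabel Sum.swap) a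
  obtain ⟨ψ, hψ⟩ := h1.exists_realizeIn_iff_realize θ
  refine ⟨l, ψ, fun i => ⟨c i, hcP i⟩, fun x => ?_⟩
  have hθx := hθ (fun i => x i) fun i => (x i).2
  rw [Formula.realize_relabel, Sum.elim_swap] at hθx
  rw [hφ, ← hψ, hθx]
  congr! 1
  ext (i | i) <;> rfl

end

variable (L : FirstOrder.Language.{u, u}) (C : Type u) [L.Structure C] [L.IsRelational]
variable (P : L.Relations 1)

/-- If `T^P` eliminates imaginaries, then every subset of a power of
`P^C` definable in `C` (with arbitrary parameters from `C`) has a code in `P^C`: a tuple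
`c̄ ⊆ P^C` such that every automorphism of `C` fixes the set setwise iff it fixes `c̄`
pointwise. -/
theorem definable_subsets_of_P_have_codes_in_P
    (h1 : Hypothesis1 L C P)
    (hEI : EliminatesImaginariesP L C P)
    (n : ℕ) (X : Set (Fin n → C))
    (hXP : ∀ x ∈ X, ∀ i, x i ∈ Pset L C P)
    (hXdef : ∃ (k : ℕ) (φ : L.Formula (Fin n ⊕ Fin k)) (a : Fin k → C),
      ∀ x : Fin n → C, x ∈ X ↔ φ.Realize (Sum.elim x a)) :
    ∃ (l : ℕ) (c : Fin l → C), (∀ i, c i ∈ Pset L C P) ∧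
      ∀ σ : C ≃[L] C,
        ((∀ x : Fin n → C, x ∈ X ↔ (fun i => σ (x i)) ∈ X) ↔ ∀ i, σ (c i) = c i) := by
  obtain ⟨l, ψ, c, hψ⟩ := h1.exists_realizeIn_of_definable hXdef
  obtain ⟨l₀, φ₀, c₀, hdef, huniq⟩ := hEI n {x | (fun i => (x i : C)) ∈ X} ⟨l, ψ, c, hψ⟩
  refine ⟨l₀, fun i => c₀ i, fun i => (c₀ i).2, fun σ => ?_⟩
  let := setStructure L C (Pset L C P)
  calc (∀ x : Fin n → C, x ∈ X ↔ (fun i => σ (x i)) ∈ X)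
      ↔ ∀ x, x ∈ _ ↔ restrictEquiv _ σ (fun _ => apply_mem_Pset_iff σ) ∘ x ∈ _ :=
        invariant_iff_restrictEquiv_invariant σ _ hXP
    _ ↔ ∀ i, restrictEquiv _ σ _ (c₀ i) = c₀ i := fixes_iff_fixes_code hdef huniq _
    _ ↔ ∀ i, σ (c₀ i) = c₀ i := by simp only [Subtype.ext_iff, coe_restrictEquiv_apply]

end OverPredicate
end
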